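/- arXiv:0705.1971 — 3 statements merged into one kernel-verified Lean document; each statement's English description precedes it below -/
import Mathlib

section
/- Let f : A → B be a continuous *-homomorphism between locally multiplicatively convex C*-algebras (topological *-algebras whose topology is generated by a family of continuous C*-seminorms). If f has the seminorm extension property, i.e. every continuous C*-seminorm p on A equals f*q for some continuous C*-seminorm q on B, then f is a topological embedding (an injective map that is a homeomorphism onto its image). -/
/-- A C*-seminorm on a complex *-algebra. -/
def IsCstarSeminorm {A : Type*} [Ring A] [Algebra ℂ A] [StarRing A] (p : A → ℝ) : Prop :=
  p 0 = 0 ∧ (∀ x, 0 ≤ p x) ∧ (∀ x y, p (x + y) ≤ p x + p y) ∧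
  (∀ (c : ℂ) (x : A), p (c • x) = ‖c‖ * p x) ∧
  (∀ x y, p (x * y) ≤ p x * p y) ∧ (∀ x, p (star x * x) = p x ^ 2)

/-- The topology of `A` is the l.m.c.-C*-topology generated by its continuous C*-seminorms. -/
def IsLmcTopology (A : Type*) [Ring A] [Algebra ℂ A] [StarRing A] [TopologicalSpace A] : Prop :=
  ∀ s : Set A, IsOpen s ↔ ∀ a ∈ s, ∃ (n : ℕ) (p : Fin n → A → ℝ) (ε : ℝ), 0 < ε ∧
    (∀ i, IsCstarSeminorm (p i) ∧ Continuous (p i)) ∧ {x | ∀ i, p i (x - a) < ε} ⊆ s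

/-- A *-homomorphism (as a bare function). -/
def IsStarHomFun {A B : Type*} [Ring A] [Algebra ℂ A] [StarRing A]
    [Ring B] [Algebra ℂ B] [StarRing B] (f : A → B) : Prop :=
  (∀ x y, f (x + y) = f x + f y) ∧ (∀ x y, f (x * y) = f x * f y) ∧
  (∀ x, f (star x) = star (f x)) ∧ ∀ (c : ℂ) (x : A), f (c • x) = c • f x

/-- The seminorm extension property: every continuous C*-seminorm on the domain is the
pullback of a continuous C*-seminorm on the target. -/
def HasSEP {A B : Type*} [Ring A] [Algebra ℂ A] [StarRing A] [TopologicalSpace A]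
    [Ring B] [Algebra ℂ B] [StarRing B] [TopologicalSpace B] (f : A → B) : Prop :=
  ∀ p : A → ℝ, IsCstarSeminorm p → Continuous p →
    ∃ q : B → ℝ, IsCstarSeminorm q ∧ Continuous q ∧ ∀ a, p a = q (f a)

/-- A continuous *-homomorphism between l.m.c.-C*-algebras with the seminorm extension
property is a topological embedding. -/
theorem sep_implies_embedding {A B : Type*}
    [Ring A] [Algebra ℂ A] [StarRing A] [TopologicalSpace A] [T2Space A]
    [Ring B] [Algebra ℂ B] [StarRing B] [TopologicalSpace B] [T2Space B]
    (hA : IsLmcTopology A) (hB : IsLmcTopology B)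
    (f : A → B) (hf : Continuous f) (hhom : IsStarHomFun f) (hsep : HasSEP f) :
    Topology.IsEmbedding f := by
  obtain ⟨hadd, hmul, hstar, hsmul⟩ := hhom
  have hf0 : f 0 = 0 := by
    have h : f 0 = f 0 + f 0 := by simpa using hadd 0 0
    exact left_eq_add.mp h
  have hneg : ∀ x, f (-x) = -f x := by
    intro x
    have h : f x + f (-x) = 0 := by
      have := hadd x (-x); rw [add_neg_cancel, hf0] at this; exact this.symm
    exact eq_neg_of_add_eq_zero_right h
  have hsub : ∀ x y, f (x - y) = f x - f y := by
    intro x y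
    rw [sub_eq_add_neg, hadd, hneg, sub_eq_add_neg]
  constructor
  · -- inducing
    rw [Topology.isInducing_iff_nhds]
    intro a
    apply le_antisymm
    · exact hf.continuousAt.tendsto.le_comap
    · -- comap f (𝓝 (f a)) ≤ 𝓝 a
      intro s hs
      rw [mem_nhds_iff] at hs
      obtain ⟨t, hts, hto, hat⟩ := hs
      obtain ⟨n, p, ε, hε, hp, hsubs⟩ := (hA t).mp hto a hat
      choose q hq hqc hpq using fun i => hsep (p i) (hp i).1 (hp i).2
      have hV : {y : B | ∀ i, q i (y - f a) < ε} ∈ nhds (f a) := by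
        have hopen : IsOpen {y : B | ∀ i, q i (y - f a) < ε} := by
          rw [hB]
          intro y hy
          rcases Nat.eq_zero_or_pos n with h0 | hpos
          · subst h0
            exact ⟨0, q, ε, hε, fun i => ⟨hq i, hqc i⟩, fun z _ i => i.elim0⟩
          · haveI : Nonempty (Fin n) := ⟨⟨0, hpos⟩⟩
            set M := Finset.univ.sup' Finset.univ_nonempty (fun i => q i (y - f a)) with hM
            have hδ : 0 < ε - M :=
              sub_pos.mpr ((Finset.sup'_lt_iff _).mpr fun i _ => hy i)
            refine ⟨n, q, ε - M, hδ, fun i => ⟨hq i, hqc i⟩, ?_⟩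
            intro z hz i
            have h1 : q i (z - f a) ≤ q i (z - y) + q i (y - f a) := by
              have hzd : z - f a = (z - y) + (y - f a) := (sub_add_sub_cancel z y (f a)).symm
              rw [hzd]; exact (hq i).2.2.1 _ _
            have h2 : q i (y - f a) ≤ M :=
              Finset.le_sup' (fun i => q i (y - f a)) (Finset.mem_univ i)
            have h3 := hz i
            linarith
        refine hopen.mem_nhds ?_
        intro i
        simpa [sub_self, (hq i).1] using hε
      refine Filter.mem_comap.mpr ⟨_, hV, ?_⟩
      intro x hx
      apply hts
      apply hsubs
      intro i
      have : p i (x - a) = q i (f x - f a) := by rw [hpq i, hsub]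
      rw [this]
      exact hx i
  · -- injective
    intro a b hab
    by_contra hne
    have hopen : IsOpen ({b}ᶜ : Set A) := isOpen_compl_singleton
    obtain ⟨n, p, ε, hε, hp, hsubs⟩ := (hA {b}ᶜ).mp hopen a hne
    have hb : b ∈ {x : A | ∀ i, p i (x - a) < ε} := by
      intro i
      obtain ⟨q, hq, hqc, hpq⟩ := hsep (p i) (hp i).1 (hp i).2
      have : p i (b - a) = q (f b - f a) := by rw [hpq, hsub]
      rw [this, hab, sub_self, hq.1]
      exact hε
    exact hsubs hb rfl
end

section
/- Let X be a compact Hausdorff space and B a topological *-algebra that is ν-sequentially complete for an infinite ordinal ν (every Cauchy ν-sequence converges). Then the algebra C(X,B) of continuous maps with the compact-open topology is also ν-sequentially complete. -/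
/-- A ν-sequence is Cauchy if its differences eventually lie in any neighborhood of 0. -/
def NuCauchy {A : Type*} [AddGroup A] [TopologicalSpace A] (ν : Ordinal)
    (x : Ordinal → A) : Prop :=
  ∀ U ∈ nhds (0 : A), ∃ γ, γ < ν ∧
    ∀ α β : Ordinal, γ ≤ α → α < ν → γ ≤ β → β < ν → x α - x β ∈ U

/-- Convergence of a ν-sequence to a point. -/
def NuConv {A : Type*} [TopologicalSpace A] (ν : Ordinal) (x : Ordinal → A) (l : A) : Prop :=
  ∀ U ∈ nhds l, ∃ γ, γ < ν ∧ ∀ α : Ordinal, γ ≤ α → α < ν → x α ∈ U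

/-- ν-sequential completeness: every Cauchy ν-sequence converges. -/
def NuComplete (ν : Ordinal) (A : Type*) [AddGroup A] [TopologicalSpace A] : Prop :=
  ∀ x : Ordinal → A, NuCauchy ν x → ∃ l : A, NuConv ν x l

/-! A ν-sequence is a net indexed by `Iio ν`, and for the group uniformity ν-Cauchy and
ν-convergent mean Cauchy and convergent as a net. On a compact space the compact-open topology is
the topology of uniform convergence, so a Cauchy net in `C(X, B)` is uniformly Cauchy. Its
pointwise limits exist by ν-completeness of `B`; the convergence to them is then uniform, and a
uniform limit of continuous maps is continuous. -/

open Filter Set Topology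
open scoped UniformConvergence

section OrdinalNets

variable {A : Type*} {ν : Ordinal}

theorem NuCauchy.pos [AddGroup A] [TopologicalSpace A] {x : Ordinal → A} (hx : NuCauchy ν x) :
    0 < ν :=
  let ⟨_, hγ, _⟩ := hx univ univ_mem
  pos_of_gt hγ

theorem nuConv_iff_tendsto [TopologicalSpace A] (hν : 0 < ν) {x : Ordinal → A} {l : A} :
    NuConv ν x l ↔ Tendsto (fun a : Iio ν => x a) atTop (𝓝 l) := by
  have : Nonempty (Iio ν) := ⟨⟨0, hν⟩⟩
  simp only [NuConv, tendsto_atTop', Subtype.forall, Subtype.exists, Subtype.mk_le_mk, mem_Iio]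
  exact forall₂_congr fun _ _ => exists_congr fun _ => exists_prop.symm.trans <|
    exists_congr fun _ => forall_congr' fun _ => Imp.swap

variable [UniformSpace A] [AddGroup A] [IsUniformAddGroup A]

theorem nuCauchy_iff_cauchy_map {x : Ordinal → A} :
    NuCauchy ν x ↔ Cauchy (map (fun a : Iio ν => x a) atTop) := by
  rw [IsUniformAddGroup.cauchy_map_iff_tendsto]
  refine ⟨fun hx => ?_, fun ⟨hne, hT⟩ U hU => ?_⟩
  · have : Nonempty (Iio ν) := ⟨⟨0, hx.pos⟩⟩
    refine ⟨atTop_neBot, atTop_basis.prod_self.tendsto_left_iff.2 fun U hU => ?_⟩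
    obtain ⟨γ, hγ, h⟩ := hx U hU
    exact ⟨⟨γ, hγ⟩, trivial, fun p hp => h _ _ hp.1 p.1.2 hp.2 p.2.2⟩
  · have : Nonempty (Iio ν) := (atTop_neBot_iff.1 hne).1
    obtain ⟨⟨γ, hγ⟩, -, h⟩ := atTop_basis.prod_self.tendsto_left_iff.1 hT U hU
    exact ⟨γ, hγ, fun α β hα hαν hβ hβν =>
      h (mk_mem_prod (a := ⟨α, hαν⟩) (b := ⟨β, hβν⟩) hα hβ)⟩

theorem nuComplete_iff :
    NuComplete ν A ↔
      ∀ u : Iio ν → A, Cauchy (map u atTop) → ∃ a, Tendsto u atTop (𝓝 a) := by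
  refine ⟨fun hA u hu => ?_, fun h x hx => ?_⟩
  · let x : Ordinal → A := fun o => if ho : o < ν then u ⟨o, ho⟩ else 0
    have hxu : (fun a : Iio ν => x a) = u := funext fun a => dif_pos a.2
    have hx : NuCauchy ν x := nuCauchy_iff_cauchy_map.2 (hxu ▸ hu)
    obtain ⟨a, ha⟩ := hA x hx
    exact ⟨a, hxu ▸ (nuConv_iff_tendsto hx.pos).1 ha⟩
  · obtain ⟨a, ha⟩ := h _ (nuCauchy_iff_cauchy_map.1 hx)
    exact ⟨a, (nuConv_iff_tendsto hx.pos).2 ha⟩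

end OrdinalNets

namespace ContinuousMap

variable {X β ι : Type*} [TopologicalSpace X] [CompactSpace X] [UniformSpace β] {l : Filter ι}

theorem uniformCauchySeqOn_of_cauchy_map {F : ι → C(X, β)} (hF : Cauchy (map F l)) :
    UniformCauchySeqOn (fun i x => F i x) l univ := fun _ hU =>
  ((cauchy_map_iff.1 hF).2.eventually_mem
    (hasBasis_compactConvergenceUniformity_of_compact.mem_of_mem hU)).mono fun _ h x _ => h x

theorem exists_tendsto_of_cauchy_map
    (hβ : ∀ u : ι → β, Cauchy (map u l) → ∃ b, Tendsto u l (𝓝 b))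
    {F : ι → C(X, β)} (hF : Cauchy (map F l)) : ∃ f, Tendsto F l (𝓝 f) := by
  have hUC := uniformCauchySeqOn_of_cauchy_map hF
  have : l.NeBot := (cauchy_map_iff.1 hF).1
  choose f hf using fun x => hβ _ (hUC.cauchy_map (mem_univ x))
  have hT : TendstoUniformly (fun i x => F i x) f l :=
    tendstoUniformlyOn_univ.1 (hUC.tendstoUniformlyOn_of_tendsto fun x _ => hf x)
  exact ⟨⟨f, hT.continuous (Frequently.of_forall fun i => (F i).continuous)⟩,
    tendsto_iff_tendstoUniformly.2 hT⟩

theorem isUniformAddGroup_of_compactSpace {B : Type*} [AddCommGroup B] [UniformSpace B]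
    [IsUniformAddGroup B] : IsUniformAddGroup C(X, B) :=
  isUniformEmbedding_uniformFunOfFun.isUniformInducing.isUniformAddGroup
    (coeFnAddMonoidHom : C(X, B) →+ (X →ᵤ B))

end ContinuousMap

theorem mappingSpace_nuComplete_general {X B : Type*} [TopologicalSpace X] [CompactSpace X]
    [Ring B] [TopologicalSpace B] [IsTopologicalRing B]
    (ν : Ordinal) (hB : NuComplete ν B) :
    NuComplete ν C(X, B) := by
  let := IsTopologicalAddGroup.rightUniformSpace B
  have := isUniformAddGroup_of_addCommGroup (G := B)
  have := ContinuousMap.isUniformAddGroup_of_compactSpace (X := X) (B := B)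
  rw [nuComplete_iff] at hB ⊢
  exact fun F hF => ContinuousMap.exists_tendsto_of_cauchy_map hB hF

/-- If `B` is a ν-sequentially complete topological *-algebra and `X` is compact Hausdorff,
then `C(X,B)` with the compact-open topology is ν-sequentially complete. -/
theorem mappingSpace_nuComplete {X B : Type*} [TopologicalSpace X] [CompactSpace X]
    [T2Space X] [Ring B] [Algebra ℂ B] [StarRing B] [TopologicalSpace B] [IsTopologicalRing B]
    [ContinuousStar B] [ContinuousConstSMul ℂ B] [T2Space B]
    (ν : Ordinal) (hν : Ordinal.omega0 ≤ ν) (hB : NuComplete ν B) :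
    NuComplete ν C(X, B) :=
  mappingSpace_nuComplete_general ν hB
end

section
/- Let j : X → Y be a cofibration (a map having the left lifting property with respect to all Serre fibrations that are weak homotopy equivalences) between pointed compact Hausdorff spaces, and let Z be any pointed topological space. Then the precomposition map j* : C_*(Y,Z) → C_*(X,Z) between pointed mapping spaces with the compact-open topology is a Serre fibration. -/
/-- The `n`-sphere, as the unit sphere in `ℝ^{n+1}`. -/
abbrev Sph (n : ℕ) : Type := Metric.sphere (0 : EuclideanSpace ℝ (Fin (n + 1))) 1

/-- A Serre fibration: a map with the homotopy lifting property with respect to all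
cubes. -/
def IsSerreFibration {E B : Type*} [TopologicalSpace E] [TopologicalSpace B]
    (p : E → B) : Prop :=
  ∀ (n : ℕ) (H : C((Fin n → unitInterval) × unitInterval, B))
    (g : C(Fin n → unitInterval, E)), (∀ x, p (g x) = H (x, 0)) →
    ∃ G : C((Fin n → unitInterval) × unitInterval, E),
      (∀ x, G (x, 0) = g x) ∧ ∀ y, p (G y) = H y

/-- A weak homotopy equivalence: a continuous map inducing a bijection on path
components and isomorphisms on all homotopy groups at every basepoint, formulated via
based maps from spheres. -/
def IsWeakHomotopyEquiv {X Y : Type*} [TopologicalSpace X] [TopologicalSpace Y]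
    (f : C(X, Y)) : Prop :=
  (∀ y : Y, ∃ x : X, Joined (f x) y) ∧
  (∀ x x' : X, Joined (f x) (f x') → Joined x x') ∧
  (∀ (n : ℕ) (s₀ : Sph n) (x : X),
    (∀ g : C(Sph n, Y), g s₀ = f x →
      ∃ h : C(Sph n, X), h s₀ = x ∧ (f.comp h).HomotopicRel g {s₀}) ∧
    (∀ h₁ h₂ : C(Sph n, X), h₁ s₀ = x → h₂ s₀ = x →
      (f.comp h₁).HomotopicRel (f.comp h₂) {s₀} → h₁.HomotopicRel h₂ {s₀}))

/-!
By the exponential law, a lifting problem for `j*` against the inclusion of the cube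
`Iⁿ × {0} ⊆ Iⁿ × I` is the same as a lifting problem for `j` against evaluation at the start
point, `C(I, V) → V` with `V = C(Iⁿ, Z)`; basepoints take care of themselves, because the
lift out of `Y` extends a map out of `X` that already sends `x₀` to the constant map at `z₀`.
So it suffices that evaluation at the start point is an acyclic Serre fibration. Paths can
be lifted by reparametrisation. For the homotopy groups, a sphere map `g` together with a
path `γ` starting at `g s₀` lifts to a map into the path space that sends `s₀` to `γ`: near
`s₀` first run along a contraction of the sphere into `s₀`, then along `γ`.
-/

open Set unitInterval

noncomputable section

section PathStart

variable (W : Type*) [TopologicalSpace W]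

def pathStart : C(C(I, W), W) := ⟨fun γ => γ 0, continuous_eval_const 0⟩

variable {W}

@[simp]
lemma pathStart_apply (γ : C(I, W)) : pathStart W γ = γ 0 := rfl

theorem pathStart_homotopyLifting {T : Type*} [TopologicalSpace T] (H : C(T × I, W))
    (g : C(T, C(I, W))) (hg : ∀ x, g x 0 = H (x, 0)) :
    ∃ G : C(T × I, C(I, W)), (∀ x, G (x, 0) = g x) ∧ ∀ y, G y 0 = H y := by
  let Φ : (T × I) × I → W := fun p =>
    if (p.2 : ℝ) ≤ p.1.2 then IccExtend zero_le_one (fun r => H (p.1.1, r)) (p.1.2 - p.2)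
    else IccExtend zero_le_one (g p.1.1) (p.2 - p.1.2)
  have hΦ : Continuous Φ := by
    refine Continuous.if_le (by fun_prop) (by fun_prop) (by fun_prop) (by fun_prop) fun p hp => ?_
    simp [hp, hg]
  refine ⟨ContinuousMap.curry ⟨Φ, hΦ⟩, fun x => ?_, fun y => ?_⟩
  · ext s
    by_cases hs : s = 0
    · simp [Φ, hs, hg]
    · simp [Φ, hs]
  · simp [Φ]

theorem isSerreFibration_pathStart : IsSerreFibration (pathStart W) :=
  fun _ H g hg => pathStart_homotopyLifting H g fun x => hg x

theorem joined_const_start (γ : C(I, W)) : Joined γ (ContinuousMap.const' (γ 0)) :=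
  ⟨{ toFun t := ⟨fun s => γ (s * σ t), by fun_prop⟩
     continuous_toFun := ContinuousMap.continuous_of_continuous_uncurry _
       (show Continuous fun p : I × I => γ (p.2 * σ p.1) by fun_prop)
     source' := by ext s; simp
     target' := by ext s; simp }⟩

end PathStart

/-- A strong form of an NDR presentation of the pair `(A, {a₀})`: `h` moves every point `a`
with `u a ≤ 1` into `a₀` by the time `u a`. -/
structure PointNDR (A : Type*) [TopologicalSpace A] (a₀ : A) where
  u : C(A, ℝ)
  h : C(A × ℝ, A)
  u_base : u a₀ = 0
  u_nonneg : ∀ a, 0 ≤ u a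
  h_zero : ∀ a, h (a, 0) = a
  h_eq_base : ∀ a t, u a ≤ t → t ≤ 1 → h (a, t) = a₀

namespace PointNDR

variable {A : Type*} [TopologicalSpace A] {a₀ : A} (N : PointNDR A a₀) {W : Type*}

/-- Follow `g` along the contraction of `a` up to time `u a`, then follow `γ`. -/
def liftFun (g : A → W) (γ : I → W) (a : A) (s : I) : W :=
  if (s : ℝ) ≤ N.u a then g (N.h (a, s)) else IccExtend zero_le_one γ (s - N.u a)

lemma liftFun_base {g : A → W} {γ : I → W} (hg : g a₀ = γ 0) (s : I) :
    N.liftFun g γ a₀ s = γ s := by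
  rcases eq_or_ne s 0 with rfl | hs
  · simp [liftFun, N.u_base, N.h_zero, hg]
  · have : ¬(s : ℝ) ≤ 0 := not_le.2 (unitInterval.pos_iff_ne_zero.2 hs)
    simp [liftFun, N.u_base, this]

lemma liftFun_zero (g : A → W) (γ : I → W) (a : A) : N.liftFun g γ a 0 = g a := by
  simp [liftFun, N.u_nonneg, N.h_zero]

variable [TopologicalSpace W]

lemma continuous_liftFun {T : Type*} [TopologicalSpace T] {G : T → A → W}
    (hG : Continuous ↿G) (γ : C(I, W)) (hG₀ : ∀ t, G t a₀ = γ 0) :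
    Continuous fun p : (T × A) × I => N.liftFun (G p.1.1) γ p.1.2 p.2 := by
  refine Continuous.if_le ?_ (by fun_prop) (by fun_prop) (by fun_prop) fun p hp => ?_
  · exact hG.comp (continuous_fst.fst.prodMk (N.h.continuous.comp (by fun_prop)))
  · rw [← hp, N.h_eq_base _ _ hp.ge p.2.2.2, hG₀, hp, sub_self, IccExtend_left]
    rfl

def lift (g : C(A, W)) (γ : C(I, W)) (hg : g a₀ = γ 0) : C(A, C(I, W)) :=
  ContinuousMap.curry ⟨fun p => N.liftFun g γ p.1 p.2,
    (N.continuous_liftFun (G := fun (_ : Unit) => g) (by fun_prop) γ fun _ => hg).comp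
      (by fun_prop : Continuous fun p : A × I => (((), p.1), p.2))⟩

variable {g : C(A, W)} {γ : C(I, W)} (hg : g a₀ = γ 0)

lemma lift_apply (a : A) (s : I) : N.lift g γ hg a s = N.liftFun g γ a s := rfl

lemma lift_base : N.lift g γ hg a₀ = γ := by
  ext s
  exact N.liftFun_base hg s

lemma pathStart_comp_lift : (pathStart W).comp (N.lift g γ hg) = g := by
  ext a
  exact N.liftFun_zero g γ a

theorem homotopicRel_lift (H : C(A, C(I, W))) (hγ : H a₀ = γ) :
    H.HomotopicRel (N.lift ((pathStart W).comp H) γ (by simp [hγ])) {a₀} := by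
  -- at time `t`, contract only up to time `t * u a` before following the path `H a`
  let D : (I × A) × I → W := fun p =>
    IccExtend zero_le_one (H (N.h (p.1.2, min (p.2 : ℝ) (p.1.1 * N.u p.1.2))))
      (p.2 - p.1.1 * N.u p.1.2)
  have hD : Continuous D := by
    refine Continuous.IccExtend ?_ (by fun_prop)
    have : Continuous fun p : (I × A) × I => N.h (p.1.2, min (p.2 : ℝ) (p.1.1 * N.u p.1.2)) :=
      N.h.continuous.comp (by fun_prop)
    exact continuous_eval.comp ((H.continuous.comp this).prodMap continuous_id)
  refine ⟨⟨⟨ContinuousMap.curry ⟨D, hD⟩, fun a => ?_, fun a => ?_⟩, ?_⟩⟩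
  · ext s
    simp [D, min_eq_right s.2.1, N.h_zero]
  · ext s
    rw [lift_apply, liftFun]
    split_ifs with hs
    · simp [D, hs, IccExtend_of_le_left zero_le_one _ (sub_nonpos.2 hs)]
    · have hs' : N.u a ≤ s := (not_le.1 hs).le
      simp [D, min_eq_right hs', N.h_eq_base a _ le_rfl (hs'.trans s.2.2), hγ]
  · rintro t a rfl
    ext s
    simp [D, N.u_base, min_eq_right s.2.1, N.h_zero]

theorem lift_homotopicRel_lift {g₁ g₂ : C(A, W)} (hK : g₁.HomotopicRel g₂ {a₀})
    (hg₁ : g₁ a₀ = γ 0) (hg₂ : g₂ a₀ = γ 0) :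
    (N.lift g₁ γ hg₁).HomotopicRel (N.lift g₂ γ hg₂) {a₀} := by
  obtain ⟨K⟩ := hK
  refine ⟨⟨⟨ContinuousMap.curry ⟨_, N.continuous_liftFun (G := fun t a => K (t, a))
      K.continuous γ fun t => by rw [K.eq_fst t rfl, hg₁]⟩, fun a => ?_, fun a => ?_⟩, ?_⟩⟩
  · ext s
    simp [lift_apply]
  · ext s
    simp [lift_apply]
  · rintro t a rfl
    ext s
    simp [lift_apply, N.liftFun_base hg₁,
      N.liftFun_base (g := fun a => K (t, a)) ((K.eq_fst t rfl).trans hg₁)]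

end PointNDR

namespace SphereContraction

variable {E : Type*} [NormedAddCommGroup E] (s₀ : Metric.sphere (0 : E) 1)

/-- The factor `2 - ‖a - s₀‖` vanishes at the antipode `-s₀`, which keeps `chord` away
from the origin. -/
def weight (a : Metric.sphere (0 : E) 1) (t : ℝ) : ℝ :=
  min 1 (max 0 t / ‖(a : E) - s₀‖) * min 1 (2 - ‖(a : E) - s₀‖)

lemma weight_mem_Icc (a : Metric.sphere (0 : E) 1) (t : ℝ) : weight s₀ a t ∈ Icc (0 : ℝ) 1 := by
  have hd : ‖(a : E) - s₀‖ ≤ 2 := by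
    simpa [one_add_one_eq_two] using
      norm_sub_le_of_le (norm_eq_of_mem_sphere a).le (norm_eq_of_mem_sphere s₀).le
  unfold weight
  constructor
  · exact mul_nonneg (le_min zero_le_one (by positivity)) (le_min zero_le_one (by linarith))
  · exact mul_le_one₀ (min_le_left _ _) (le_min zero_le_one (by linarith)) (min_le_left _ _)

variable [NormedSpace ℝ E]

lemma weight_eq_zero_of_eq_neg {a : Metric.sphere (0 : E) 1} (ha : (a : E) = -s₀) (t : ℝ) :
    weight s₀ a t = 0 := by
  have : ‖(a : E) - s₀‖ = 2 := by
    rw [ha, ← neg_add', norm_neg, ← two_smul ℝ, norm_smul, norm_eq_of_mem_sphere]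
    norm_num
  simp [weight, this]

def chord (a : Metric.sphere (0 : E) 1) (t : ℝ) : E := (a : E) + weight s₀ a t • ((s₀ : E) - a)

lemma chord_ne_zero (a : Metric.sphere (0 : E) 1) (t : ℝ) : chord s₀ a t ≠ 0 := by
  intro h0
  obtain ⟨hw0, hw1⟩ := weight_mem_Icc s₀ a t
  set w := weight s₀ a t with hw
  have hsplit : (1 - w) • (a : E) = -(w • (s₀ : E)) := by
    rw [chord, smul_sub] at h0
    rw [sub_smul, one_smul]
    linear_combination (norm := module) h0
  have hnorm : 1 - w = w := by
    have := congrArg norm hsplit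
    rwa [norm_neg, norm_smul, norm_smul, norm_eq_of_mem_sphere, norm_eq_of_mem_sphere,
      Real.norm_of_nonneg (by linarith), Real.norm_of_nonneg hw0, mul_one, mul_one] at this
  have hhalf : w = 1 / 2 := by linarith
  have ha : (a : E) = -s₀ := by
    rw [hnorm, ← smul_neg, hhalf] at hsplit
    exact smul_right_injective E (by norm_num) hsplit
  have := weight_eq_zero_of_eq_neg s₀ ha t
  rw [← hw, hhalf] at this
  norm_num at this

lemma chord_eq_of_le {a : Metric.sphere (0 : E) 1} {t : ℝ} (hat : ‖(a : E) - s₀‖ ≤ t)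
    (ht : t ≤ 1) : chord s₀ a t = s₀ := by
  rcases (norm_nonneg ((a : E) - s₀)).eq_or_lt with h0 | hpos
  · rw [eq_comm, norm_eq_zero, sub_eq_zero] at h0
    simp [chord, h0]
  · have hw : weight s₀ a t = 1 := by
      rw [weight, max_eq_right (hpos.trans_le hat).le, min_eq_left ((one_le_div hpos).2 hat),
        min_eq_left (by linarith), one_mul]
    simp [chord, hw]

lemma continuous_weight_smul :
    Continuous fun p : Metric.sphere (0 : E) 1 × ℝ => weight s₀ p.1 p.2 • ((s₀ : E) - p.1) := by
  have hu : Continuous fun p : Metric.sphere (0 : E) 1 × ℝ => ‖(p.1 : E) - s₀‖ := by fun_prop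
  refine continuous_iff_continuousAt.2 fun p₀ => ?_
  by_cases h0 : ‖(p₀.1 : E) - s₀‖ = 0
  · have hp₀ : (s₀ : E) - p₀.1 = 0 := by rw [← norm_eq_zero, norm_sub_rev, h0]
    simp only [ContinuousAt, hp₀, smul_zero]
    refine squeeze_zero_norm (fun p => ?_) (h0 ▸ hu.tendsto p₀)
    obtain ⟨hw0, hw1⟩ := weight_mem_Icc s₀ p.1 p.2
    rw [norm_smul, Real.norm_of_nonneg hw0, norm_sub_rev]
    exact mul_le_of_le_one_left (norm_nonneg _) hw1
  · have hmax : Continuous fun p : Metric.sphere (0 : E) 1 × ℝ => max 0 p.2 := by fun_prop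
    refine ContinuousAt.smul ?_ (by fun_prop)
    exact (continuousAt_const.min (hmax.continuousAt.div hu.continuousAt h0)).mul
      (continuousAt_const.min (continuousAt_const.sub hu.continuousAt))

lemma continuous_chord : Continuous fun p : Metric.sphere (0 : E) 1 × ℝ => chord s₀ p.1 p.2 :=
  (continuous_subtype_val.comp continuous_fst).add (continuous_weight_smul s₀)

end SphereContraction

open SphereContraction in
def PointNDR.sphere {E : Type*} [NormedAddCommGroup E] [NormedSpace ℝ E]
    (s₀ : Metric.sphere (0 : E) 1) : PointNDR (Metric.sphere (0 : E) 1) s₀ where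
  u := ⟨fun a => ‖(a : E) - s₀‖, by fun_prop⟩
  h := ⟨fun p => ⟨‖chord s₀ p.1 p.2‖⁻¹ • chord s₀ p.1 p.2, by simp [norm_smul, chord_ne_zero]⟩, by
    have hne (p : Metric.sphere (0 : E) 1 × ℝ) : ‖chord s₀ p.1 p.2‖ ≠ 0 :=
      norm_ne_zero_iff.2 (chord_ne_zero s₀ p.1 p.2)
    exact (((continuous_chord s₀).norm.inv₀ hne).smul (continuous_chord s₀)).subtype_mk _⟩
  u_base := by simp
  u_nonneg a := norm_nonneg ((a : E) - s₀)
  h_zero a := by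
    ext1
    simp [chord, weight, norm_eq_of_mem_sphere]
  h_eq_base a t hut ht1 := by
    ext1
    simp [chord_eq_of_le s₀ hut ht1, norm_eq_of_mem_sphere]

section WeakEquivalence

variable {A : Type*} [TopologicalSpace A] {a₀ : A} {W : Type*} [TopologicalSpace W]

theorem PointNDR.exists_lift (N : PointNDR A a₀) (g : C(A, W)) (γ : C(I, W))
    (hg : g a₀ = γ 0) : ∃ H : C(A, C(I, W)), H a₀ = γ ∧ (pathStart W).comp H = g :=
  ⟨N.lift g γ hg, N.lift_base hg, N.pathStart_comp_lift hg⟩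

theorem PointNDR.homotopicRel_of_pathStart_comp (N : PointNDR A a₀) {H₁ H₂ : C(A, C(I, W))}
    (h₀ : H₁ a₀ = H₂ a₀)
    (hK : ((pathStart W).comp H₁).HomotopicRel ((pathStart W).comp H₂) {a₀}) :
    H₁.HomotopicRel H₂ {a₀} :=
  (N.homotopicRel_lift H₁ h₀).trans
    ((N.lift_homotopicRel_lift hK _ _).trans (N.homotopicRel_lift H₂ rfl).symm)

theorem isWeakHomotopyEquiv_pathStart : IsWeakHomotopyEquiv (pathStart W) := by
  refine ⟨fun w => ⟨ContinuousMap.const' w, Joined.refl w⟩, fun γ δ hγδ => ?_,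
    fun n s₀ γ => ⟨fun g hg => ?_, fun H₁ H₂ h₁ h₂ => ?_⟩⟩
  · exact (joined_const_start γ).trans ((hγδ.map ContinuousMap.const'.continuous).trans
      (joined_const_start δ).symm)
  · obtain ⟨H, hH, hHg⟩ := (PointNDR.sphere s₀).exists_lift g γ hg
    exact ⟨H, hH, hHg ▸ .refl _⟩
  · exact (PointNDR.sphere s₀).homotopicRel_of_pathStart_comp (h₁.trans h₂.symm)

end WeakEquivalence

section Precomposition

variable {X Y Z : Type*} [TopologicalSpace X] [TopologicalSpace Y] [TopologicalSpace Z]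

def HasLiftingAgainst {E B : Type*} [TopologicalSpace E] [TopologicalSpace B] (j : C(X, Y))
    (p : C(E, B)) : Prop :=
  ∀ (u : C(X, E)) (v : C(Y, B)), (∀ x, p (u x) = v (j x)) →
    ∃ l : C(Y, E), (∀ x, l (j x) = u x) ∧ ∀ y, p (l y) = v y

variable {x₀ : X} {y₀ : Y} (z₀ : Z) (j : C(X, Y)) (hj : j x₀ = y₀)

def pointedPrecomp (f : {f : C(Y, Z) // f y₀ = z₀}) : {f : C(X, Z) // f x₀ = z₀} :=
  ⟨f.1.comp j, by simp [hj, f.2]⟩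

theorem continuous_pointedPrecomp : Continuous (pointedPrecomp z₀ j hj) :=
  ((ContinuousMap.continuous_precomp j).comp continuous_subtype_val).subtype_mk _

theorem pointedPrecomp_homotopyLifting [LocallyCompactSpace X] [LocallyCompactSpace Y]
    {T : Type*} [TopologicalSpace T] [LocallyCompactSpace T]
    (hlift : HasLiftingAgainst j (pathStart C(T, Z)))
    (H : C(T × I, {f : C(X, Z) // f x₀ = z₀})) (g : C(T, {f : C(Y, Z) // f y₀ = z₀}))
    (hg : ∀ q, pointedPrecomp z₀ j hj (g q) = H (q, 0)) :
    ∃ G : C(T × I, {f : C(Y, Z) // f y₀ = z₀}),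
      (∀ q, G (q, 0) = g q) ∧ ∀ p, pointedPrecomp z₀ j hj (G p) = H p := by
  -- `u`, `v` and `G` are the exponential adjoints of `H`, `g` and of the lift `l`
  let H' : C(T × I, C(X, Z)) := ⟨fun p => (H p).1, by fun_prop⟩
  let g' : C(T, C(Y, Z)) := ⟨fun q => (g q).1, by fun_prop⟩
  let u : C(X, C(I, C(T, Z))) :=
    (H'.uncurry.comp ⟨fun p : (X × I) × T => ((p.2, p.1.2), p.1.1), by fun_prop⟩).curry.curry
  let v : C(Y, C(T, Z)) := (g'.uncurry.comp ContinuousMap.prodSwap).curry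
  obtain ⟨l, hlj, hlv⟩ := hlift u v fun x => by
    ext q
    exact (congrArg (fun f => f.1 x) (hg q)).symm
  let G : C(T × I, C(Y, Z)) :=
    (l.uncurry.uncurry.comp ⟨fun p : (T × I) × Y => ((p.2, p.1.2), p.1.1), by fun_prop⟩).curry
  have hG₀ : ∀ p, G p y₀ = z₀ := fun p => by
    simp [G, ← hj, hlj, u, H', (H p).2]
  refine ⟨⟨fun p => ⟨G p, hG₀ p⟩, G.continuous.subtype_mk _⟩, fun q => ?_, fun p => ?_⟩
  · ext y
    simpa [G, v, g'] using congrArg (fun f => f q) (hlv y)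
  · ext x
    simp [pointedPrecomp, G, hlj, u, H']

end Precomposition

/-- For a cofibration `j : X → Y` of pointed compact Hausdorff spaces (a map with the
left lifting property against acyclic Serre fibrations) and any pointed space `Z`,
precomposition `j* : C_*(Y,Z) → C_*(X,Z)` between pointed mapping spaces with the
compact-open topology is a Serre fibration. -/
theorem pointed_precomp_serre_fibration {X Y Z : Type}
    [TopologicalSpace X] [CompactSpace X] [T2Space X]
    [TopologicalSpace Y] [CompactSpace Y] [T2Space Y] [TopologicalSpace Z]
    (x₀ : X) (y₀ : Y) (z₀ : Z) (j : C(X, Y)) (hj : j x₀ = y₀)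
    (hcof : ∀ (E B' : Type) [TopologicalSpace E] [TopologicalSpace B'] (p : C(E, B')),
      IsSerreFibration ⇑p → IsWeakHomotopyEquiv p →
      ∀ (u : C(X, E)) (v : C(Y, B')), (∀ x, p (u x) = v (j x)) →
        ∃ l : C(Y, E), (∀ x, l (j x) = u x) ∧ ∀ y, p (l y) = v y) :
    ∀ F : {f : C(Y, Z) // f y₀ = z₀} → {f : C(X, Z) // f x₀ = z₀},
      (∀ f x, (F f).1 x = f.1 (j x)) → Continuous F ∧ IsSerreFibration F := by
  intro F hF
  obtain rfl : F = pointedPrecomp z₀ j hj := funext fun f => Subtype.ext (ContinuousMap.ext (hF f))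
  exact ⟨continuous_pointedPrecomp z₀ j hj, fun _ => pointedPrecomp_homotopyLifting z₀ j hj
    (hcof _ _ _ isSerreFibration_pathStart isWeakHomotopyEquiv_pathStart)⟩
end
end
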